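/- arXiv:1409.2459 — 7 statements merged into one kernel-verified Lean document; each statement's English description precedes it below -/
import Mathlib

section
/- For positive integers r and n with 4r ≡ 1 (mod n), the gcd of 3^r + 2 and 3^n − 1 divides 13; moreover, since 3^r + 2 ≡ 3, 5, or 11 (mod 13) for every r, we have gcd(3^r + 2, 3^n − 1) = 1. -/
/-!
If `d` divides both `3 ^ r + 2` and `3 ^ n - 1`, then in `ZMod d` we have `3 ^ r = -2` and
`3 ^ n = 1`, so `4 * r ≡ 1 [MOD n]` gives `3 = 3 ^ (4 * r) = (-2) ^ 4 = 16`, i.e. `d ∣ 13`.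
Since `3 ^ 3 ≡ 1 [MOD 13]`, the residues of `3 ^ r + 2` modulo 13 are `3, 5, 11`, so `d = 1`.
-/

theorem eq_sixteen_of_pow_eq_neg_two {R : Type*} [CommRing R] {x : R} {r n : ℕ}
    (hr : x ^ r = -2) (hn : x ^ n = 1) (h : 4 * r ≡ 1 [MOD n]) : x = 16 :=
  calc x = x ^ (4 * r) := by rw [pow_eq_pow_of_modEq h hn, pow_one]
    _ = (x ^ r) ^ 4 := by rw [mul_comm, pow_mul]
    _ = 16 := by rw [hr]; norm_num

theorem dvd_thirteen_of_dvd_three_pow {d r n : ℕ} (hr : d ∣ 3 ^ r + 2) (hn : d ∣ 3 ^ n - 1)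
    (h : 4 * r ≡ 1 [MOD n]) : d ∣ 13 := by
  have hr' : (3 : ZMod d) ^ r = -2 := by
    have := (ZMod.natCast_eq_zero_iff _ _).mpr hr
    push_cast at this
    exact eq_neg_of_add_eq_zero_left this
  have hn' : (3 : ZMod d) ^ n = 1 := by
    have := (ZMod.natCast_eq_natCast_iff _ _ _).mpr
      ((Nat.modEq_iff_dvd' (Nat.one_le_pow _ _ (by norm_num))).mpr hn)
    exact_mod_cast this.symm
  have h13 : ((13 : ℕ) : ZMod d) = 0 := by
    push_cast
    linear_combination -eq_sixteen_of_pow_eq_neg_two hr' hn' h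
  exact (ZMod.natCast_eq_zero_iff _ _).mp h13

theorem three_pow_add_two_mod_thirteen (k : ℕ) :
    (3 ^ k + 2) % 13 = 3 ∨ (3 ^ k + 2) % 13 = 5 ∨ (3 ^ k + 2) % 13 = 11 := by
  have hk : (3 : ZMod 13) ^ k = 3 ^ (k % 3) :=
    pow_eq_pow_of_modEq (Nat.mod_modEq k 3).symm (by decide)
  have hval : (3 ^ k + 2) % 13 = ((3 : ZMod 13) ^ (k % 3) + 2).val := by
    rw [← ZMod.val_natCast, ← hk]
    push_cast
    rfl
  rw [hval]
  have : k % 3 < 3 := Nat.mod_lt k (by norm_num)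
  interval_cases k % 3 <;> decide

theorem not_thirteen_dvd_three_pow_add_two (k : ℕ) : ¬ 13 ∣ 3 ^ k + 2 := by
  rw [Nat.dvd_iff_mod_eq_zero]
  rcases three_pow_add_two_mod_thirteen k with h | h | h <;> omega

theorem stmt_0_general (r n : ℕ) (h : 4 * r ≡ 1 [MOD n]) :
    Nat.gcd (3 ^ r + 2) (3 ^ n - 1) ∣ 13 ∧
    (∀ r' : ℕ, (3 ^ r' + 2) % 13 = 3 ∨ (3 ^ r' + 2) % 13 = 5 ∨ (3 ^ r' + 2) % 13 = 11) ∧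
    Nat.gcd (3 ^ r + 2) (3 ^ n - 1) = 1 := by
  have hdvd : Nat.gcd (3 ^ r + 2) (3 ^ n - 1) ∣ 13 :=
    dvd_thirteen_of_dvd_three_pow (Nat.gcd_dvd_left _ _) (Nat.gcd_dvd_right _ _) h
  have hcop : Nat.Coprime 13 (3 ^ r + 2) :=
    (Nat.Prime.coprime_iff_not_dvd (by norm_num)).mpr (not_thirteen_dvd_three_pow_add_two r)
  refine ⟨hdvd, three_pow_add_two_mod_thirteen, ?_⟩
  exact Nat.eq_one_of_dvd_coprimes hcop hdvd (Nat.gcd_dvd_left _ _)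

theorem stmt_0 (r n : ℕ) (hr : 0 < r) (hn : 0 < n) (h : 4 * r ≡ 1 [MOD n]) :
    Nat.gcd (3 ^ r + 2) (3 ^ n - 1) ∣ 13 ∧
    (∀ r' : ℕ, (3 ^ r' + 2) % 13 = 3 ∨ (3 ^ r' + 2) % 13 = 5 ∨ (3 ^ r' + 2) % 13 = 11) ∧
    Nat.gcd (3 ^ r + 2) (3 ^ n - 1) = 1 :=
  stmt_0_general r n h
end

section
/- Let b > 1 and n be positive integers, and suppose s_i, t_i ∈ ℤ for i ∈ ℤ/nℤ satisfy ∑_{i ∈ ℤ/nℤ} s_i b^i ≡ ∑_{i ∈ ℤ/nℤ} t_i b^i (mod b^n − 1). Then there is a unique collection of integers {c_i}_{i ∈ ℤ/nℤ} such that s_i + c_{i−1} = t_i + b·c_i for all i ∈ ℤ/nℤ, given explicitly by c_i = (1/(b^n − 1)) ∑_{j=0}^{n−1} (s_{j+i+1} − t_{j+i+1}) b^j (indices mod n). -/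
/-!
Write `d = s - t` and `q = b ^ n - 1`. The recurrence says `d i = b * c i - c (i - 1)`, and
summing `d (j + i + 1) * b ^ j` over `j < n` telescopes to `q * c i`; as `q ≠ 0` this gives the
formula and uniqueness. For existence one needs `q` to divide every rotated sum
`S i = ∑ j < n, d (j + i + 1) * b ^ j`. The same telescoping gives
`b * S i - S (i - 1) = q * d i`, so divisibility passes from `S (i - 1)` to `S i` because `q` is
coprime to `b`, and `S (-1) = ∑ i, d i * b ^ i.val` is divisible by `q` by hypothesis.
-/

open Finset

theorem isCoprime_pow_sub_one_self {R : Type*} [CommRing R] {n : ℕ} (x : R) (hn : n ≠ 0) : IsCoprime (x ^ n - 1) x :=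
  ⟨-1, x ^ (n - 1), by
    rw [← pow_succ, Nat.sub_add_cancel (Nat.one_le_iff_ne_zero.2 hn)]
    ring⟩

namespace ZMod

variable {n : ℕ} {R : Type*} [CommRing R]

theorem sum_range_mul_pow_succ_sub_telescope (f : ZMod n → R) (x : R) (i : ZMod n) :
    ∑ j ∈ range n, (f (j + i + 1) * x ^ (j + 1) - f (j + i) * x ^ j) = (x ^ n - 1) * f i := by
  have := sum_range_sub (fun j : ℕ => f (j + i) * x ^ j) n
  simp only [Nat.cast_succ, natCast_self, Nat.cast_zero, zero_add, pow_zero, mul_one,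
    add_right_comm _ (1 : ZMod n)] at this
  rw [this]
  ring

def rotatedDigitSum (x : R) (d : ZMod n → R) (i : ZMod n) : R :=
  ∑ j ∈ range n, d (j + i + 1) * x ^ j

theorem mul_rotatedDigitSum_sub (x : R) (d : ZMod n → R) (i : ZMod n) :
    x * rotatedDigitSum x d i - rotatedDigitSum x d (i - 1) = (x ^ n - 1) * d i := by
  rw [← sum_range_mul_pow_succ_sub_telescope, rotatedDigitSum, rotatedDigitSum, mul_sum,
    ← sum_sub_distrib]
  refine sum_congr rfl fun j _ => ?_
  rw [add_sub_assoc', sub_add_cancel, pow_succ]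
  ring

theorem rotatedDigitSum_of_recurrence {x : R} {d c : ZMod n → R}
    (hc : ∀ i, d i = x * c i - c (i - 1)) (i : ZMod n) :
    rotatedDigitSum x d i = (x ^ n - 1) * c i := by
  rw [← sum_range_mul_pow_succ_sub_telescope, rotatedDigitSum]
  refine sum_congr rfl fun j _ => ?_
  rw [hc, add_sub_cancel_right, pow_succ]
  ring

theorem rotatedDigitSum_neg_one [NeZero n] (x : R) (d : ZMod n → R) :
    rotatedDigitSum x d (-1) = ∑ i : ZMod n, d i * x ^ i.val := by
  refine sum_nbij' (fun j => (j : ZMod n)) val (fun _ _ => mem_univ _)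
    (fun i _ => mem_range.2 i.val_lt) (fun j hj => val_natCast_of_lt (mem_range.1 hj))
    (fun i _ => natCast_zmod_val i) fun j hj => ?_
  rw [neg_add_cancel_right, val_natCast_of_lt (mem_range.1 hj)]

theorem dvd_rotatedDigitSum [NeZero n] {x : R} {d : ZMod n → R}
    (h : x ^ n - 1 ∣ ∑ i : ZMod n, d i * x ^ i.val) (i : ZMod n) :
    x ^ n - 1 ∣ rotatedDigitSum x d i := by
  have step : ∀ i, x ^ n - 1 ∣ rotatedDigitSum x d (i - 1) →
      x ^ n - 1 ∣ rotatedDigitSum x d i := by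
    intro i hi
    refine (isCoprime_pow_sub_one_self x (NeZero.ne n)).dvd_of_dvd_mul_left ?_
    rw [← sub_add_cancel (x * _) (rotatedDigitSum x d (i - 1)), mul_rotatedDigitSum_sub]
    exact dvd_add (dvd_mul_right _ _) hi
  have hk : ∀ k : ℕ, x ^ n - 1 ∣ rotatedDigitSum x d ((k : ZMod n) - 1) := by
    intro k
    induction k with
    | zero => simpa [rotatedDigitSum_neg_one] using h
    | succ k ih => simpa using step _ ih
  simpa using hk (i + 1).val

theorem existsUnique_recurrence [IsDomain R] {x : R} (hq : x ^ n - 1 ≠ 0) {d : ZMod n → R}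
    (hdvd : ∀ i, x ^ n - 1 ∣ rotatedDigitSum x d i) :
    ∃! c : ZMod n → R, ∀ i, d i = x * c i - c (i - 1) := by
  choose c hc using hdvd
  refine ⟨c, fun i => mul_left_cancel₀ hq ?_,
    fun c' hc' => funext fun i => mul_left_cancel₀ hq ?_⟩
  · rw [← mul_rotatedDigitSum_sub, hc, hc, mul_sub, mul_left_comm]
  · rw [← rotatedDigitSum_of_recurrence hc', hc]

end ZMod

open ZMod

theorem stmt_1 (b n : ℕ) [NeZero n] (hb : 1 < b) (s t : ZMod n → ℤ)
    (h : (∑ i : ZMod n, s i * (b : ℤ) ^ i.val) ≡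
         (∑ i : ZMod n, t i * (b : ℤ) ^ i.val) [ZMOD ((b : ℤ) ^ n - 1)]) :
    (∃! c : ZMod n → ℤ, ∀ i : ZMod n, s i + c (i - 1) = t i + (b : ℤ) * c i) ∧
    (∀ c : ZMod n → ℤ, (∀ i : ZMod n, s i + c (i - 1) = t i + (b : ℤ) * c i) →
      ∀ i : ZMod n, ((b : ℤ) ^ n - 1) * c i =
        ∑ j ∈ Finset.range n,
          (s ((j : ZMod n) + i + 1) - t ((j : ZMod n) + i + 1)) * (b : ℤ) ^ j) := by
  have hq : (b : ℤ) ^ n - 1 ≠ 0 :=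
    (sub_pos.2 (one_lt_pow₀ (by exact_mod_cast hb) (NeZero.ne n))).ne'
  have hrec : ∀ (c : ZMod n → ℤ) i,
      s i + c (i - 1) = t i + b * c i ↔ (s - t) i = b * c i - c (i - 1) := by
    intro c i
    rw [Pi.sub_apply]
    omega
  have hdvd : (b : ℤ) ^ n - 1 ∣ ∑ i : ZMod n, (s - t) i * (b : ℤ) ^ i.val := by
    simpa only [Pi.sub_apply, sub_mul, sum_sub_distrib] using h.symm.dvd
  simp_rw [hrec]
  exact ⟨existsUnique_recurrence hq (dvd_rotatedDigitSum hdvd),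
    fun c hc i => (rotatedDigitSum_of_recurrence hc i).symm⟩
end

section
/- Let F be a finite field of order q = 3^n with n odd, and let r be a positive integer with gcd(r, n) = 1. Then the set T = {(v, w) ∈ (F*)² : v² = −w^{3^r − 1}·(w^{3^{2r} − 3^r} + 1)} has exactly q + 1 elements. -/
/-!
For `w ≠ 0` put `a = w ^ (3 ^ r - 1)`, a nonzero square. By the Frobenius the right-hand side is
`-a (a + 1) ^ (3 ^ r)`, and `-1` is a nonsquare since `q ≡ 3 mod 4`; so, with `χ` the quadratic
character, `w` contributes `1 - χ(a + 1)` values of `v`. As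
`gcd(3 ^ r - 1, q - 1) = 3 ^ gcd(r, n) - 1 = 2`, the power map `w ↦ w ^ (3 ^ r - 1)` on `F*` has
the same fibres as squaring, so `#T = (q - 1) - ∑_{u ∈ F*} χ(u² + 1)`, and this character sum
is `-2` by a Jacobi sum evaluation.
-/

open Finset

section PowGcd

variable {G : Type*} [CommGroup G] [Fintype G]

theorem ker_powMonoidHom_gcd_card (d : ℕ) :
    (powMonoidHom (d.gcd (Nat.card G)) : G →* G).ker = (powMonoidHom d).ker := by
  ext x
  simp [pow_gcd_eq_one]

theorem range_powMonoidHom_gcd_card (d : ℕ) :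
    (powMonoidHom (d.gcd (Nat.card G)) : G →* G).range = (powMonoidHom d).range := by
  symm
  refine Subgroup.eq_of_le_of_card_ge ?_ ?_
  · rintro _ ⟨x, rfl⟩
    exact ⟨x ^ (d / d.gcd (Nat.card G)), by
      simp only [powMonoidHom_apply, ← pow_mul, Nat.div_mul_cancel (Nat.gcd_dvd_left _ _)]⟩
  · rw [← Subgroup.index_ker, ← Subgroup.index_ker, ker_powMonoidHom_gcd_card]

theorem card_pow_gcd_card_eq [DecidableEq G] (d : ℕ) (y : G) :
    #{x | x ^ d.gcd (Nat.card G) = y} = #{x | x ^ d = y} := by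
  by_cases hy : y ∈ (powMonoidHom d : G →* G).range
  · have hy' : y ∈ (powMonoidHom (d.gcd (Nat.card G)) : G →* G).range := by
      rwa [range_powMonoidHom_gcd_card]
    change #{x | powMonoidHom _ x = y} = #{x | powMonoidHom _ x = y}
    rw [MonoidHom.card_fiber_eq_of_mem_range _ hy' ⟨1, one_pow _⟩,
      MonoidHom.card_fiber_eq_of_mem_range _ hy ⟨1, one_pow _⟩]
    congr 1
    ext x
    simp
  · have hy' : y ∉ (powMonoidHom (d.gcd (Nat.card G)) : G →* G).range := by
      rwa [range_powMonoidHom_gcd_card]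
    simp only [MonoidHom.mem_range, powMonoidHom_apply, not_exists] at hy hy'
    rw [filter_false_of_mem fun x _ => hy' x, filter_false_of_mem fun x _ => hy x]

theorem sum_pow_gcd_card {M : Type*} [AddCommMonoid M] (f : G → M) (d : ℕ) :
    ∑ x, f (x ^ d.gcd (Nat.card G)) = ∑ x, f (x ^ d) := by
  classical
  rw [← sum_fiberwise' univ (· ^ d.gcd (Nat.card G)), ← sum_fiberwise' univ (· ^ d)]
  simp only [sum_const]
  exact sum_congr rfl fun y _ => by congr 1; convert card_pow_gcd_card_eq d y

end PowGcd

theorem sum_eq_apply_zero_add_sum_units {G₀ M : Type*} [GroupWithZero G₀] [Fintype G₀]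
    [DecidableEq G₀] [AddCommMonoid M] (f : G₀ → M) :
    ∑ x, f x = f 0 + ∑ u : G₀ˣ, f u := by
  rw [← add_sum_erase _ _ (mem_univ 0), sum_subtype (p := (· ≠ 0)) _ fun _ => by simp]
  exact congrArg (f 0 + ·)
    (Equiv.sum_comp unitsEquivNeZero fun x : {a : G₀ // a ≠ 0} => f x).symm

theorem neg_pow_mul_pow_add_one_ne_zero {K : Type*} [Field K] (hneg : ¬IsSquare (-1 : K))
    {p : ℕ} (hp : Odd p) (r : ℕ) {w : K} (hw : w ≠ 0) :
    -w ^ (p ^ r - 1) * (w ^ (p ^ (2 * r) - p ^ r) + 1) ≠ 0 := by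
  have heven : Even (p ^ (2 * r) - p ^ r) := Nat.Odd.sub_odd hp.pow hp.pow
  exact mul_ne_zero (neg_ne_zero.mpr (pow_ne_zero _ hw))
    fun h => hneg (eq_neg_of_add_eq_zero_left h ▸ heven.isSquare_pow w)

theorem three_pow_mod_four_of_odd {n : ℕ} (hn : Odd n) : 3 ^ n % 4 = 3 := by
  obtain ⟨k, rfl⟩ := hn
  rw [pow_succ, pow_mul, Nat.mul_mod, Nat.pow_mod]
  norm_num

section QuadraticChar

variable {F : Type*} [Field F] [Fintype F] [DecidableEq F]

theorem sum_comp_sq_eq_sum_quadraticChar_mul (hF : ringChar F ≠ 2) (g : F → ℤ) :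
    ∑ x, g (x ^ 2) = ∑ z, (quadraticChar F z + 1) * g z := by
  rw [← sum_fiberwise' univ (· ^ 2)]
  refine sum_congr rfl fun z _ => ?_
  rw [sum_const, nsmul_eq_mul, ← quadraticChar_card_sqrts hF z, Set.toFinset_ofPred]

theorem sum_quadraticChar_sq_add_one (hF : ringChar F ≠ 2) :
    ∑ x : F, quadraticChar F (x ^ 2 + 1) = -1 := by
  rw [sum_comp_sq_eq_sum_quadraticChar_mul hF (fun z => quadraticChar F (z + 1))]
  set χ := quadraticChar F
  have hshift : ∑ z : F, χ (z + 1) = 0 :=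
    (Equiv.sum_comp (Equiv.addRight 1) χ).trans (quadraticChar_sum_zero hF)
  have hjacobi : jacobiSum χ χ = -χ (-1) := by
    rw [← jacobiSum_nontrivial_inv (quadraticChar_ne_one hF), (quadraticChar_isQuadratic F).inv]
  have hconsec : ∑ z : F, χ z * χ (z + 1) = χ (-1) * jacobiSum χ χ := by
    rw [jacobiSum, mul_sum, ← Equiv.sum_comp (Equiv.neg F)]
    refine sum_congr rfl fun x _ => ?_
    rw [Equiv.neg_apply, neg_eq_neg_one_mul x, map_mul, neg_one_mul, neg_add_eq_sub, mul_assoc]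
  have hsq : χ (-1) * χ (-1) = 1 := by rw [← map_mul, neg_one_mul, neg_neg, map_one]
  simp only [add_mul, one_mul, sum_add_distrib, hshift, hconsec, hjacobi]
  linear_combination -hsq

theorem sum_units_quadraticChar_sq_add_one (hF : ringChar F ≠ 2) :
    ∑ u : Fˣ, quadraticChar F ((u : F) ^ 2 + 1) = -2 := by
  have h := sum_quadraticChar_sq_add_one hF
  rw [sum_eq_apply_zero_add_sum_units, zero_pow two_ne_zero, zero_add, map_one] at h
  linarith

theorem ncard_sq_eq_sum_units_quadraticChar (hF : ringChar F ≠ 2) {c : F → F}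
    (hc : ∀ w, w ≠ 0 → c w ≠ 0) :
    ({vw : F × F | vw.1 ≠ 0 ∧ vw.2 ≠ 0 ∧ vw.1 ^ 2 = c vw.2}.ncard : ℤ)
      = ∑ u : Fˣ, (quadraticChar F (c u) + 1) := by
  let e : {vw : F × F | vw.1 ≠ 0 ∧ vw.2 ≠ 0 ∧ vw.1 ^ 2 = c vw.2}
      ≃ Σ u : Fˣ, {v : F | v ^ 2 = c u} :=
    { toFun := fun vw => ⟨Units.mk0 _ vw.2.2.1, vw.1.1, vw.2.2.2⟩
      invFun := fun uv => ⟨(uv.2, uv.1), fun hv => hc _ uv.1.ne_zero <| by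
          simpa [show (uv.2 : F) = 0 from hv] using uv.2.2.symm, uv.1.ne_zero, uv.2.2⟩
      left_inv := fun _ => rfl
      right_inv := fun _ => Sigma.subtype_ext (Units.mk0_val _ (Units.ne_zero _)) rfl }
  rw [← Nat.card_coe_set_eq, Nat.card_congr e, Nat.card_sigma]
  push_cast
  refine sum_congr rfl fun u _ => ?_
  rw [← quadraticChar_card_sqrts hF, Nat.card_eq_card_toFinset]

theorem quadraticChar_pow_mul_pow_add_one (p : ℕ) [Fact p.Prime] [CharP F p] (hp : Odd p)
    (r : ℕ) {w : F} (hw : w ≠ 0) :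
    quadraticChar F (w ^ (p ^ r - 1) * (w ^ (p ^ (2 * r) - p ^ r) + 1))
      = quadraticChar F (w ^ (p ^ r - 1) + 1) := by
  have hodd : Odd (p ^ r) := hp.pow
  have hfrob : w ^ (p ^ (2 * r) - p ^ r) + 1 = (w ^ (p ^ r - 1) + 1) ^ p ^ r := by
    rw [add_pow_char_pow, one_pow, ← pow_mul, Nat.sub_one_mul, ← pow_add, two_mul]
  have hsq : quadraticChar F (w ^ (p ^ r - 1)) = 1 := by
    obtain ⟨k, hk⟩ := Nat.Odd.sub_odd hodd odd_one
    rw [hk, ← two_mul, pow_mul', quadraticChar_sq_one' (pow_ne_zero k hw)]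
  rw [hfrob, map_mul, hsq, one_mul, map_pow,
    ← MulChar.pow_apply' _ (pow_ne_zero r hp.pos.ne'), (quadraticChar_isQuadratic F).pow_odd hodd]

theorem quadraticChar_neg_pow_mul_pow_add_one (p : ℕ) [Fact p.Prime] [CharP F p] (hp : Odd p)
    (hneg : ¬IsSquare (-1 : F)) (r : ℕ) {w : F} (hw : w ≠ 0) :
    quadraticChar F (-w ^ (p ^ r - 1) * (w ^ (p ^ (2 * r) - p ^ r) + 1))
      = -quadraticChar F (w ^ (p ^ r - 1) + 1) := by
  rw [neg_mul, neg_eq_neg_one_mul, map_mul, quadraticChar_neg_one_iff_not_isSquare.mpr hneg,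
    quadraticChar_pow_mul_pow_add_one p hp r hw, neg_one_mul]

end QuadraticChar

theorem stmt_6_general (F : Type*) [Field F] [Fintype F] (n r : ℕ) (hn : Odd n)
    (hcard : Fintype.card F = 3 ^ n) (hgcd : Nat.gcd r n = 1) :
    {vw : F × F | vw.1 ≠ 0 ∧ vw.2 ≠ 0 ∧
      vw.1 ^ 2 = -vw.2 ^ (3 ^ r - 1) * (vw.2 ^ (3 ^ (2 * r) - 3 ^ r) + 1)}.ncard
      = 3 ^ n + 1 := by
  classical
  have : Fact (Nat.Prime 3) := ⟨Nat.prime_three⟩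
  have : CharP F 3 := charP_of_card_eq_prime_pow hcard
  have hF : ringChar F ≠ 2 := by rw [ringChar.eq F 3]; decide
  have hneg : ¬IsSquare (-1 : F) := by
    rw [FiniteField.isSquare_neg_one_iff, hcard, three_pow_mod_four_of_odd hn]
    decide
  have hexp : (3 ^ r - 1).gcd (Nat.card Fˣ) = 2 := by
    rw [Nat.card_eq_fintype_card, Fintype.card_units, hcard, Nat.pow_sub_one_gcd_pow_sub_one, hgcd]
    rfl
  rw [← Nat.cast_inj (R := ℤ), ncard_sq_eq_sum_units_quadraticChar hF
    fun _ => neg_pow_mul_pow_add_one_ne_zero hneg (p := 3) (by decide) r]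
  calc _ = ∑ u : Fˣ, (1 - quadraticChar F (((u ^ (3 ^ r - 1) : Fˣ) : F) + 1)) := by
        refine sum_congr rfl fun u _ => ?_
        rw [quadraticChar_neg_pow_mul_pow_add_one 3 (by decide) hneg r u.ne_zero,
          Units.val_pow_eq_pow_val]
        ring
    _ = ∑ u : Fˣ, (1 - quadraticChar F (((u ^ 2 : Fˣ) : F) + 1)) :=
      hexp ▸ (sum_pow_gcd_card (fun u : Fˣ => 1 - quadraticChar F ((u : F) + 1)) _).symm
    _ = _ := by
      simp only [Units.val_pow_eq_pow_val, sum_sub_distrib, sum_units_quadraticChar_sq_add_one hF,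
        sum_const, card_univ, Fintype.card_units, hcard, nsmul_one]
      rw [Nat.cast_sub (Nat.one_le_pow _ _ three_pos)]
      push_cast
      ring

theorem stmt_6 (F : Type*) [Field F] [Fintype F] (n r : ℕ) (hn : Odd n)
    (hcard : Fintype.card F = 3 ^ n) (hr : 0 < r) (hgcd : Nat.gcd r n = 1) :
    {vw : F × F | vw.1 ≠ 0 ∧ vw.2 ≠ 0 ∧
      vw.1 ^ 2 = -vw.2 ^ (3 ^ r - 1) * (vw.2 ^ (3 ^ (2 * r) - 3 ^ r) + 1)}.ncard
      = 3 ^ n + 1 :=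
  stmt_6_general F n r hn hcard hgcd
end

section
/- Let F be a finite field of order q, ψ its canonical additive character, and d a positive integer with gcd(d, q − 1) = 1. Then ∑_{a ∈ F*} W(a) = q and ∑_{a ∈ F*} W(a)² = q², where W(a) = ∑_{x ∈ F} ψ(x^d − a·x). -/
/-- The canonical additive character of a finite field `F` of characteristic `p`:
`ψ(x) = exp(2πi·Tr(x)/p)`, where `Tr` is the absolute trace. -/
noncomputable def canonicalPsi (p : ℕ) (F : Type*) [Field F] [Fintype F]
    [Algebra (ZMod p) F] (x : F) : ℂ :=
  Complex.exp (2 * Real.pi * Complex.I * ((Algebra.trace (ZMod p) F x).val : ℂ) / p)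

/-!
The map `a ↦ W(a)` is essentially a Fourier transform in the linear coefficient, so both moments
come from orthogonality `∑ₐ ψ(a b) = q·[b = 0]`: the first moment over all of `F` is `q ψ(0^d)`,
and the second is `q ∑ₓ ψ(x^d + (-x)^d)`. Coprimality of `d` and `q - 1` makes `x ↦ x^d` a
bijection, so `W(0) = ∑ₓ ψ(x) = 0`, and forces `d` odd unless the characteristic is `2`; either
way `x^d + (-x)^d = 0`.
-/

open Finset

section Character

variable (p : ℕ) [Fact p.Prime] (F : Type*) [Field F] [Fintype F] [Algebra (ZMod p) F]

noncomputable def canonicalAddChar : AddChar F ℂ :=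
  ZMod.stdAddChar.compAddMonoidHom (Algebra.trace (ZMod p) F).toAddMonoidHom

lemma canonicalPsi_eq_canonicalAddChar (x : F) : canonicalPsi p F x = canonicalAddChar p F x := by
  rw [canonicalPsi, canonicalAddChar, AddChar.compAddMonoidHom_apply, ZMod.stdAddChar_apply,
    ZMod.toCircle_apply]
  simp

lemma canonicalAddChar_ne_one : canonicalAddChar p F ≠ 1 := by
  obtain ⟨x, hx⟩ := Algebra.trace_surjective (ZMod p) F 1
  refine AddChar.ne_one_iff.2 ⟨x, fun h => one_ne_zero (α := ZMod p) ?_⟩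
  rw [canonicalAddChar, AddChar.compAddMonoidHom_apply,
    ← AddChar.map_zero_eq_one (ZMod.stdAddChar (N := p))] at h
  simpa [hx] using ZMod.injective_stdAddChar h

end Character

section Moments

variable {F : Type*} [Field F] [Fintype F] [DecidableEq F]
  {R : Type*} [CommRing R] [IsDomain R] {ψ : AddChar F R}

lemma sum_addChar_sub_mul (hψ : ψ ≠ 1) (c b : F) :
    ∑ a, ψ (c - a * b) = if b = 0 then Fintype.card F * ψ c else 0 := by
  have h := AddChar.sum_mulShift (-b) (AddChar.IsPrimitive.of_ne_one hψ)
  simp_rw [sub_eq_add_neg, AddChar.map_add_eq_mul, ← mul_sum, ← mul_neg, h, neg_eq_zero]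
  split_ifs <;> simp [mul_comm]

lemma sum_sum_addChar_sub_mul (hψ : ψ ≠ 1) (f : F → F) :
    ∑ a, ∑ x, ψ (f x - a * x) = Fintype.card F * ψ (f 0) := by
  rw [sum_comm]
  simp [sum_addChar_sub_mul hψ]

lemma sum_sq_sum_addChar_sub_mul (hψ : ψ ≠ 1) (f : F → F) :
    ∑ a, (∑ x, ψ (f x - a * x)) ^ 2 = Fintype.card F * ∑ x, ψ (f x + f (-x)) := by
  have h (a x y : F) : ψ (f x - a * x) * ψ (f y - a * y) = ψ (f x + f y - a * (x + y)) := by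
    rw [← AddChar.map_add_eq_mul]; ring_nf
  calc ∑ a, (∑ x, ψ (f x - a * x)) ^ 2
      = ∑ x, ∑ y, ∑ a, ψ (f x + f y - a * (x + y)) := by
        simp_rw [sq, sum_mul_sum, h]
        rw [sum_comm]
        exact sum_congr rfl fun x _ => sum_comm
    _ = Fintype.card F * ∑ x, ψ (f x + f (-x)) := by
        simp [sum_addChar_sub_mul hψ, add_eq_zero_iff_neg_eq, mul_sum]

end Moments

section PowerMap

variable {F : Type*} [Field F] [Fintype F] {d : ℕ}

lemma pow_bijective_of_coprime_card_sub_one (hd : 0 < d)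
    (hgcd : Nat.Coprime d (Fintype.card F - 1)) : Function.Bijective (fun x : F => x ^ d) := by
  refine Finite.injective_iff_bijective.1 fun x y hxy => ?_
  have hcop : (Nat.card Fˣ).Coprime d := by
    rwa [Nat.card_units, Nat.card_eq_fintype_card, Nat.coprime_comm]
  rcases eq_or_ne x 0 with rfl | hx
  · exact (pow_eq_zero_iff hd.ne').1 (hxy.symm.trans (zero_pow hd.ne')) |>.symm
  rcases eq_or_ne y 0 with rfl | hy
  · exact (pow_eq_zero_iff hd.ne').1 (hxy.trans (zero_pow hd.ne'))
  have h := (powCoprime hcop).injective (a₁ := Units.mk0 x hx) (a₂ := Units.mk0 y hy)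
    (Units.ext (by simpa [powCoprime] using hxy))
  exact congrArg Units.val h

lemma pow_add_neg_pow_eq_zero_of_coprime_card_sub_one
    (hgcd : Nat.Coprime d (Fintype.card F - 1)) (x : F) : x ^ d + (-x) ^ d = 0 := by
  rcases Nat.even_or_odd d with hev | hodd
  · have hchar : ringChar F = 2 := by
      refine FiniteField.even_card_iff_char_two.2 (Nat.even_iff.1 ?_)
      by_contra hq
      have h2 : 2 ∣ Nat.gcd d (Fintype.card F - 1) :=
        Nat.dvd_gcd hev.two_dvd (Nat.Odd.sub_odd (Nat.not_even_iff_odd.1 hq) odd_one).two_dvd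
      simp [Nat.Coprime.gcd_eq_one hgcd] at h2
    have : CharP F 2 := ringChar.of_eq hchar
    rw [CharTwo.neg_eq, CharTwo.add_self_eq_zero]
  · rw [hodd.neg_pow, add_neg_cancel]

end PowerMap

theorem stmt_10_general (p : ℕ) [Fact p.Prime] (F : Type*) [Field F] [Fintype F]
    [DecidableEq F] [Algebra (ZMod p) F]
    (d : ℕ) (hd : 0 < d) (hgcd : Nat.gcd d (Fintype.card F - 1) = 1) :
    (∑ a ∈ Finset.univ.filter (fun a : F => a ≠ 0),
        ∑ x : F, canonicalPsi p F (x ^ d - a * x)) = (Fintype.card F : ℂ) ∧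
    (∑ a ∈ Finset.univ.filter (fun a : F => a ≠ 0),
        (∑ x : F, canonicalPsi p F (x ^ d - a * x)) ^ 2) = (Fintype.card F : ℂ) ^ 2 := by
  set ψ := canonicalAddChar p F
  have hψ : ψ ≠ 1 := canonicalAddChar_ne_one p F
  have hW₀ : ∑ x : F, ψ (x ^ d - 0 * x) = 0 := by
    simp only [zero_mul, sub_zero]
    rw [Fintype.sum_bijective _ (pow_bijective_of_coprime_card_sub_one hd hgcd) _ _ fun _ => rfl,
      AddChar.sum_eq_zero_of_ne_one hψ]
  simp only [canonicalPsi_eq_canonicalAddChar, filter_ne']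
  rw [sum_erase_eq_sub (mem_univ 0), sum_erase_eq_sub (mem_univ 0),
    sum_sum_addChar_sub_mul hψ, sum_sq_sum_addChar_sub_mul hψ, hW₀]
  simp [pow_add_neg_pow_eq_zero_of_coprime_card_sub_one hgcd, zero_pow hd.ne', sq]

theorem stmt_10 (p : ℕ) [Fact p.Prime] (F : Type*) [Field F] [Fintype F]
    [DecidableEq F] [Algebra (ZMod p) F] [CharP F p]
    (d : ℕ) (hd : 0 < d) (hgcd : Nat.gcd d (Fintype.card F - 1) = 1) :
    (∑ a ∈ Finset.univ.filter (fun a : F => a ≠ 0),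
        ∑ x : F, canonicalPsi p F (x ^ d - a * x)) = (Fintype.card F : ℂ) ∧
    (∑ a ∈ Finset.univ.filter (fun a : F => a ≠ 0),
        (∑ x : F, canonicalPsi p F (x ^ d - a * x)) ^ 2) = (Fintype.card F : ℂ) ^ 2 :=
  stmt_10_general p F d hd hgcd
end

section
/- Let n be odd and r a positive integer with gcd(3^r + 2, 3^n − 1) = 1 and gcd(r, n) = 1. Then gcd(2 − 3^r − 3^{2r}, 3^n − 1) = 2 and gcd(3^{2r} − 3^r, 3^n − 1) = 2. -/
/-!
Both numbers factor as `k * (3 ^ r - 1)` with `k = -(3 ^ r + 2)` resp. `k = 3 ^ r`, and in both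
cases `k` is coprime to `3 ^ n - 1`. So each gcd equals `gcd (3 ^ r - 1, 3 ^ n - 1) = 3 ^ gcd (r, n) - 1`,
which is `2` since `r` and `n` are coprime.
-/

theorem Int.gcd_mul_left_cancel_of_gcd_eq_one {k n : ℤ} (m : ℤ) (h : Int.gcd k n = 1) :
    Int.gcd (k * m) n = Int.gcd m n := by
  simp only [Int.gcd_eq_natAbs, Int.natAbs_mul] at h ⊢
  exact Nat.Coprime.gcd_mul_left_cancel _ h

theorem Int.gcd_pow_sub_one_pow_sub_one {a : ℕ} (ha : 0 < a) (m n : ℕ) :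
    Int.gcd ((a : ℤ) ^ m - 1) ((a : ℤ) ^ n - 1) = a ^ Nat.gcd m n - 1 := by
  have cast_pow_sub_one (k : ℕ) : (a : ℤ) ^ k - 1 = ((a ^ k - 1 : ℕ) : ℤ) := by
    push_cast [Nat.cast_sub (Nat.one_le_pow k a ha)]
    rfl
  rw [cast_pow_sub_one, cast_pow_sub_one, Int.gcd_natCast_natCast,
    Nat.pow_sub_one_gcd_pow_sub_one]

theorem isCoprime_pow_self_pow_sub_one {R : Type*} [CommRing R] (x : R) (k : ℕ) {n : ℕ}
    (hn : 0 < n) : IsCoprime (x ^ k) (x ^ n - 1) := by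
  refine IsCoprime.pow_left ⟨x ^ (n - 1), -1, ?_⟩
  rw [← pow_succ, Nat.sub_add_cancel hn]
  ring

theorem Int.gcd_mul_pow_sub_one_pow_sub_one_of_coprime {a : ℕ} (ha : 0 < a) {k : ℤ} {r n : ℕ}
    (hrn : Nat.gcd r n = 1) (hk : Int.gcd k ((a : ℤ) ^ n - 1) = 1) :
    Int.gcd (k * ((a : ℤ) ^ r - 1)) ((a : ℤ) ^ n - 1) = a - 1 := by
  rw [Int.gcd_mul_left_cancel_of_gcd_eq_one _ hk, Int.gcd_pow_sub_one_pow_sub_one ha, hrn, pow_one]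

theorem stmt_17_general (n r : ℕ) (hnpos : 0 < n)
    (hrn : Nat.gcd r n = 1) (hd : Nat.gcd (3 ^ r + 2) (3 ^ n - 1) = 1) :
    Int.gcd (2 - 3 ^ r - 3 ^ (2 * r)) ((3 : ℤ) ^ n - 1) = 2 ∧
    Int.gcd ((3 : ℤ) ^ (2 * r) - 3 ^ r) ((3 : ℤ) ^ n - 1) = 2 := by
  have h_neg : Int.gcd (-(3 ^ r + 2)) ((3 : ℤ) ^ n - 1) = 1 := by
    have h_cast : ((3 ^ n - 1 : ℕ) : ℤ) = 3 ^ n - 1 := by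
      push_cast [Nat.cast_sub (Nat.one_le_pow n 3 (by norm_num))]
      rfl
    rw [Int.neg_gcd, ← h_cast]
    exact_mod_cast hd
  have h_pow : Int.gcd (3 ^ r) ((3 : ℤ) ^ n - 1) = 1 :=
    Int.isCoprime_iff_gcd_eq_one.mp (isCoprime_pow_self_pow_sub_one 3 r hnpos)
  constructor
  · rw [show (2 - 3 ^ r - 3 ^ (2 * r) : ℤ) = -(3 ^ r + 2) * (3 ^ r - 1) by ring]
    exact_mod_cast Int.gcd_mul_pow_sub_one_pow_sub_one_of_coprime (a := 3) three_pos hrn h_neg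
  · rw [show ((3 : ℤ) ^ (2 * r) - 3 ^ r) = 3 ^ r * (3 ^ r - 1) by ring]
    exact_mod_cast Int.gcd_mul_pow_sub_one_pow_sub_one_of_coprime (a := 3) three_pos hrn h_pow

theorem stmt_17 (n r : ℕ) (hn : Odd n) (hnpos : 0 < n) (hr : 0 < r)
    (hrn : Nat.gcd r n = 1) (hd : Nat.gcd (3 ^ r + 2) (3 ^ n - 1) = 1) :
    Int.gcd (2 - 3 ^ r - 3 ^ (2 * r)) ((3 : ℤ) ^ n - 1) = 2 ∧
    Int.gcd ((3 : ℤ) ^ (2 * r) - 3 ^ r) ((3 : ℤ) ^ n - 1) = 2 :=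
  stmt_17_general n r hnpos hrn hd
end

section
/- Let F be a finite field of order q = 3^n with n odd, r with 4r ≡ 1 (mod n), d = 3^r + 2, and ψ the canonical additive character of F. If, for every a ∈ F, W(a) = ∑_{x ∈ F} ψ(x^d − a·x) is a rational integer divisible by 3^{(n+1)/2}, and ∑_{a ≠ 0} W(a)⁴ = 3q³ and ∑_{a ≠ 0} W(a)² = q², then W(a) ∈ {0, 3^{(n+1)/2}, −3^{(n+1)/2}} for every a ∈ F*. -/
/-!
Write `W(a) = 3^((n+1)/2) k(a)` with `k(a) ∈ ℤ`. Since `4 · (n+1)/2 = 2n + 2`, the two moment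
identities both say that `3^(n-1)` equals `∑ k(a)^4` and `∑ k(a)^2`. For an integer, `k^2 ≤ k^4`
with equality only when `k ∈ {0, 1, -1}`, so equality of the two sums forces it termwise.
-/

namespace Int

theorem sq_le_pow_four (k : ℤ) : k ^ 2 ≤ k ^ 4 :=
  calc k ^ 2 ≤ (k ^ 2) ^ 2 := le_self_sq _
    _ = k ^ 4 := by ring

theorem eq_zero_or_eq_one_or_eq_neg_one_of_pow_four_eq_sq {k : ℤ} (h : k ^ 4 = k ^ 2) :
    k = 0 ∨ k = 1 ∨ k = -1 := by
  have hfactor : k ^ 2 * (k ^ 2 - 1) = 0 := by linear_combination h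
  rcases mul_eq_zero.mp hfactor with hk | hk
  · exact .inl (pow_eq_zero_iff two_ne_zero |>.mp hk)
  · exact .inr (sq_eq_one_iff.mp (sub_eq_zero.mp hk))

theorem eq_zero_or_eq_one_or_eq_neg_one_of_sum_pow_four_eq_sum_sq {ι : Type*} {s : Finset ι}
    {k : ι → ℤ} (h : ∑ i ∈ s, k i ^ 4 = ∑ i ∈ s, k i ^ 2) :
    ∀ i ∈ s, k i = 0 ∨ k i = 1 ∨ k i = -1 := by
  have htermwise := (Finset.sum_eq_sum_iff_of_le fun i _ => sq_le_pow_four (k i)).mp h.symm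
  exact fun i hi => eq_zero_or_eq_one_or_eq_neg_one_of_pow_four_eq_sq (htermwise i hi).symm

end Int

theorem sum_pow_four_eq_sum_sq_of_moments {K ι : Type*} [Field K] [CharZero K] {s : Finset ι}
    {k : ι → ℤ} {c N : K} (hc : c ≠ 0)
    (h4 : ∑ i ∈ s, (c * k i) ^ 4 = c ^ 4 * N) (h2 : ∑ i ∈ s, (c * k i) ^ 2 = c ^ 2 * N) :
    ∑ i ∈ s, k i ^ 4 = ∑ i ∈ s, k i ^ 2 := by
  simp only [mul_pow, ← Finset.mul_sum] at h4 h2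
  have h4' := mul_left_cancel₀ (pow_ne_zero 4 hc) h4
  have h2' := mul_left_cancel₀ (pow_ne_zero 2 hc) h2
  exact_mod_cast h4'.trans h2'.symm

theorem stmt_18_general (F : Type*) [Field F] [Fintype F] [DecidableEq F]
    (n : ℕ) (hn : Odd n)
    (W : F → ℂ)
    (hdiv : ∀ a : F, ∃ k : ℤ, W a = ((3 ^ ((n + 1) / 2) * k : ℤ) : ℂ))
    (h4 : ∑ a ∈ Finset.univ.filter (fun a : F => a ≠ 0), (W a) ^ 4
        = 3 * ((3 : ℂ) ^ n) ^ 3)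
    (h2 : ∑ a ∈ Finset.univ.filter (fun a : F => a ≠ 0), (W a) ^ 2
        = ((3 : ℂ) ^ n) ^ 2) :
    ∀ a : F, a ≠ 0 →
      W a = 0 ∨ W a = (3 : ℂ) ^ ((n + 1) / 2) ∨ W a = -(3 : ℂ) ^ ((n + 1) / 2) := by
  choose k hk using hdiv
  obtain rfl : W = fun a => (3 : ℂ) ^ ((n + 1) / 2) * k a :=
    funext fun a => by rw [hk a]; push_cast; rfl
  obtain ⟨t, rfl⟩ := hn
  have hhalf : (2 * t + 1 + 1) / 2 = t + 1 := by omega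
  rw [hhalf] at h4 h2 ⊢
  have hsum := sum_pow_four_eq_sum_sq_of_moments (N := (3 : ℂ) ^ (2 * t)) (by norm_num)
    (h4.trans (by ring)) (h2.trans (by ring))
  intro a ha
  rcases Int.eq_zero_or_eq_one_or_eq_neg_one_of_sum_pow_four_eq_sum_sq hsum a (by simpa using ha)
    with hka | hka | hka <;> simp [hka]

theorem stmt_18 (F : Type*) [Field F] [Fintype F] [DecidableEq F] [Algebra (ZMod 3) F]
    (n r : ℕ) (hn : Odd n) (hcard : Fintype.card F = 3 ^ n)
    (h4r : 4 * r ≡ 1 [MOD n]) (d : ℕ) (hdef : d = 3 ^ r + 2)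
    (W : F → ℂ) (hW : ∀ a : F, W a = ∑ x : F, canonicalPsi 3 F (x ^ d - a * x))
    (hdiv : ∀ a : F, ∃ k : ℤ, W a = ((3 ^ ((n + 1) / 2) * k : ℤ) : ℂ))
    (h4 : ∑ a ∈ Finset.univ.filter (fun a : F => a ≠ 0), (W a) ^ 4
        = 3 * ((3 : ℂ) ^ n) ^ 3)
    (h2 : ∑ a ∈ Finset.univ.filter (fun a : F => a ≠ 0), (W a) ^ 2
        = ((3 : ℂ) ^ n) ^ 2) :
    ∀ a : F, a ≠ 0 →
      W a = 0 ∨ W a = (3 : ℂ) ^ ((n + 1) / 2) ∨ W a = -(3 : ℂ) ^ ((n + 1) / 2) :=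
  stmt_18_general F n hn W hdiv h4 h2
end

section
/- Let F be a finite field of characteristic p and d a positive integer coprime to |F| − 1. The Weil sum W(a) = ∑_{x ∈ F} ψ(x^d − a·x), with ψ the canonical additive character, is a rational integer for all a ∈ F if d ≡ 1 (mod p − 1). -/
open Finset

lemma pow_eq_self_of_modEq_one {G : Type*} [Group G] (g : G) {d : ℕ}
    (hd : d ≡ 1 [MOD Nat.card G]) : g ^ d = g :=
  (pow_eq_pow_iff_modEq.mpr (hd.of_dvd (orderOf_dvd_natCard g))).trans (pow_one g)

lemma card_filter_eq_smul {G α β : Type*} [Group G] [MulAction G α] [MulAction G β]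
    [Fintype α] [DecidableEq β] {f : α → β} (hf : ∀ (g : G) x, f (g • x) = g • f x)
    (g : G) (b : β) : #{x | f x = g • b} = #{x | f x = b} := by
  refine card_nbij' (g⁻¹ • ·) (g • ·) (fun x hx ↦ ?_) (fun x hx ↦ ?_)
    (fun x _ ↦ smul_inv_smul g x) (fun x _ ↦ inv_smul_smul g x) <;>
  simp only [coe_filter, mem_univ, true_and, Set.mem_ofPred_eq] at hx ⊢
  · rw [hf, hx, inv_smul_smul]
  · rw [hf, hx]

section AddCharSum

variable {α K : Type*} [Fintype α] [Field K] [DecidableEq K] [MulAction Kˣ α]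

lemma card_filter_eq_card_filter_one {f : α → K} (hf : ∀ (u : Kˣ) x, f (u • x) = u • f x)
    {n : K} (hn : n ≠ 0) : #{x | f x = n} = #{x | f x = 1} := by
  simpa using card_filter_eq_smul hf (Units.mk0 n hn) 1

lemma sum_addChar_comp_eq_card_sub_card {R : Type*} [Fintype K] [CommRing R] [IsDomain R]
    (ψ : AddChar K R) (hψ : ψ ≠ 1) {f : α → K}
    (hf : ∀ (u : Kˣ) x, f (u • x) = u • f x) :
    ∑ x, ψ (f x) = #{x | f x = 0} - #{x | f x = 1} := by
  have hψ_compl : ∑ n ∈ {0}ᶜ, ψ n = -1 := by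
    rw [eq_neg_iff_add_eq_zero, ← AddChar.sum_eq_zero_of_ne_one hψ,
      ← sum_compl_add_sum {0}, sum_singleton, AddChar.map_zero_eq_one]
  calc ∑ x, ψ (f x)
      = ∑ n, #{x | f x = n} * ψ n := by
        rw [← sum_fiberwise univ f]
        refine sum_congr rfl fun n _ ↦ ?_
        rw [sum_congr rfl fun x hx ↦ by rw [(mem_filter.mp hx).2], sum_const, nsmul_eq_mul]
    _ = ∑ n ∈ {0}ᶜ, #{x | f x = 1} * ψ n + #{x | f x = 0} * ψ 0 := by
        rw [← sum_compl_add_sum {0}, sum_singleton]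
        congr 1
        refine sum_congr rfl fun n hn ↦ ?_
        rw [card_filter_eq_card_filter_one hf (by simpa using hn)]
    _ = #{x | f x = 0} - #{x | f x = 1} := by
        rw [← mul_sum, hψ_compl, AddChar.map_zero_eq_one]
        ring

end AddCharSum

lemma trace_smul_pow_sub_mul {K A : Type*} [CommRing K] [CommRing A] [Algebra K A] {c : K}
    {d : ℕ} (hc : c ^ d = c) (a x : A) :
    Algebra.trace K A ((c • x) ^ d - a * (c • x)) = c • Algebra.trace K A (x ^ d - a * x) := by
  rw [smul_pow, hc, mul_smul_comm, ← smul_sub, map_smul]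

lemma canonicalPsi_eq_stdAddChar_trace (p : ℕ) [NeZero p] (F : Type*) [Field F] [Fintype F]
    [Algebra (ZMod p) F] (x : F) :
    canonicalPsi p F x = ZMod.stdAddChar (Algebra.trace (ZMod p) F x) := by
  rw [ZMod.stdAddChar_apply, ZMod.toCircle_apply, canonicalPsi]

theorem stmt_19_general (p : ℕ) [Fact p.Prime] (F : Type*) [Field F] [Fintype F]
    [Algebra (ZMod p) F]
    (d : ℕ) (hcong : d ≡ 1 [MOD p - 1]) :
    ∀ a : F, ∃ k : ℤ, (∑ x : F, canonicalPsi p F (x ^ d - a * x)) = (k : ℂ) := by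
  intro a
  set f : F → ZMod p := fun x ↦ Algebra.trace (ZMod p) F (x ^ d - a * x)
  have hunits : ∀ u : (ZMod p)ˣ, (u : ZMod p) ^ d = u := fun u ↦ by
    rw [← Units.val_pow_eq_pow_val, pow_eq_self_of_modEq_one u
      (by rwa [Nat.card_eq_fintype_card, ZMod.card_units])]
  have hf : ∀ (u : (ZMod p)ˣ) x, f (u • x) = u • f x := fun u x ↦
    trace_smul_pow_sub_mul (hunits u) a x
  refine ⟨#{x | f x = 0} - #{x | f x = 1}, ?_⟩
  simp_rw [canonicalPsi_eq_stdAddChar_trace]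
  have hψ : (ZMod.stdAddChar : AddChar (ZMod p) ℂ) ≠ 1 := by
    simpa using ZMod.isPrimitive_stdAddChar p one_ne_zero
  exact_mod_cast sum_addChar_comp_eq_card_sub_card _ hψ hf

theorem stmt_19 (p : ℕ) [Fact p.Prime] (F : Type*) [Field F] [Fintype F]
    [Algebra (ZMod p) F] [CharP F p]
    (d : ℕ) (hd : 0 < d) (hgcd : Nat.gcd d (Fintype.card F - 1) = 1)
    (hcong : d ≡ 1 [MOD p - 1]) :
    ∀ a : F, ∃ k : ℤ, (∑ x : F, canonicalPsi p F (x ^ d - a * x)) = (k : ℂ) :=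
  stmt_19_general p F d hcong
end
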